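/- arXiv:1307.3122 — 7 statements merged into one kernel-verified Lean document; each statement's English description precedes it below -/
import Mathlib

section
/- Let G and H be residually finite groups, and let G ≀ H = G^{(H)} ⋊ H be their restricted wreath product, where G^{(H)} is the group of functions H → G equal to the identity outside a finite set and H acts by shifting indices. Then G ≀ H is residually finite if and only if H is finite or G is abelian. -/
/-!
Statement 4 (Gruenberg): Let `G` and `H` be residually finite groups and let
`G ≀ H = G^{(H)} ⋊ H` be their restricted wreath product, where `G^{(H)}` is the group of
functions `H → G` equal to `1` outside a finite set and `H` acts by shifting indices,
`(h · f)(h') = f (h⁻¹ h')`.  Then `G ≀ H` is residually finite iff `H` is finite or `G`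
is abelian.
-/

noncomputable section

/-- `G^{(H)}`: the restricted product, i.e. the subgroup of `∏_H G` consisting of the
functions `H → G` equal to `1` outside a finite set. -/
def restrictedProd (G H : Type) [Group G] : Subgroup (H → G) where
  carrier := {f | (Function.mulSupport f).Finite}
  one_mem' := by simp [Function.mulSupport_one]
  mul_mem' := fun hf hg => (hf.union hg).subset (Function.mulSupport_mul _ _)
  inv_mem' := fun {f} hf => by
    simpa [Function.mulSupport_inv] using hf

/-- The shift automorphism of `G^{(H)}` associated to `h ∈ H`: `(h · f)(h') = f (h⁻¹ h')`. -/
def shiftAut (G H : Type) [Group G] [Group H] (h : H) :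
    restrictedProd G H ≃* restrictedProd G H where
  toFun f := ⟨fun h' => (f : H → G) (h⁻¹ * h'),
    Set.Finite.preimage ((mul_right_injective h⁻¹).injOn) f.2⟩
  invFun f := ⟨fun h' => (f : H → G) (h * h'),
    Set.Finite.preimage ((mul_right_injective h).injOn) f.2⟩
  left_inv f := by
    ext h'
    simp
  right_inv f := by
    ext h'
    simp
  map_mul' f g := rfl

/-- The shift action of `H` on `G^{(H)}` by automorphisms. -/
def shiftHom (G H : Type) [Group G] [Group H] : H →* MulAut (restrictedProd G H) where
  toFun := shiftAut G H
  map_one' := by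
    ext f h'
    simp [shiftAut]
  map_mul' a b := by
    ext f h'
    simp [shiftAut, mul_assoc]

/-- The restricted wreath product `G ≀ H = G^{(H)} ⋊ H`. -/
abbrev RWreath (G H : Type) [Group G] [Group H] : Type :=
  restrictedProd G H ⋊[shiftHom G H] H

/-- A group is residually finite if every nontrivial element survives in some finite
quotient, i.e. avoids some finite-index normal subgroup. -/
def ResiduallyFinite (Q : Type) [Group Q] : Prop :=
  ∀ q : Q, q ≠ 1 → ∃ N : Subgroup Q, N.Normal ∧ N.FiniteIndex ∧ q ∉ N

/-
For `H` infinite, a finite quotient of `G ≀ H` identifies two distinct translates of the copy of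
`G` sitting at `1`; since distinct copies commute, the image of the copy at `1` is abelian, so the
commutator `⁅a, b⁆` placed at `1` dies.  Conversely, a nontrivial element of the top group is
detected in `H`, and a nontrivial `f` in the base group, with `f h₀ ∉ M` for a finite-index normal
`M ◁ G`, survives in `(G ⧸ M) ≀ H` when `H` is finite, and in `(G ⧸ M) ≀ (H ⧸ K)` when `G` is
abelian: there `f` is summed over the cosets of a finite-index `K ◁ H` chosen so that `h₀` is
alone in its coset among the points of the support of `f`.
-/

open Function SemidirectProduct Pointwise
open scoped commutatorElement

theorem residuallyFinite_iff_group_residuallyFinite (Q : Type) [Group Q] :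
    ResiduallyFinite Q ↔ Group.ResiduallyFinite Q := by
  rw [Group.residuallyFinite_iff_exists_finiteIndexNormalSubgroup]
  refine forall₂_congr fun _ _ => ⟨fun ⟨N, _, _, hq⟩ => ⟨.ofSubgroup N, hq⟩, fun ⟨N, hq⟩ => ?_⟩
  exact ⟨N.toSubgroup, inferInstance, inferInstance, hq⟩

theorem Subgroup.commutatorElement_mem_of_commute_conj {Q : Type*} [Group Q] {N : Subgroup Q}
    [N.Normal] {g x y : Q} (hg : g ∈ N) (hxy : Commute x (g * y * g⁻¹)) : ⁅x, y⁆ ∈ N := by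
  let π := QuotientGroup.mk' N
  have hconj : π (g * y * g⁻¹) = π y := by
    simp [π, (QuotientGroup.eq_one_iff g).2 hg]
  rw [← QuotientGroup.eq_one_iff, ← QuotientGroup.mk'_apply, map_commutatorElement, ← hconj,
    ← map_commutatorElement, commutatorElement_eq_one_iff_commute.2 hxy, map_one]

theorem Subgroup.exists_ne_one_map_mem_of_infinite {H Q : Type*} [Group H] [Group Q] [Infinite H]
    (f : H →* Q) (N : Subgroup Q) [N.FiniteIndex] : ∃ h ≠ 1, f h ∈ N := by
  obtain ⟨h₁, h₂, hne, heq⟩ :=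
    Finite.exists_ne_map_eq_of_infinite fun h => (f h : Q ⧸ N)
  refine ⟨h₁⁻¹ * h₂, fun h => hne (inv_mul_eq_one.1 h), ?_⟩
  simpa [QuotientGroup.eq] using heq

namespace Group.ResiduallyFinite

variable {G : Type*} [Group G] [Group.ResiduallyFinite G]

theorem exists_forall_notMem {S : Set G} (hS : S.Finite) (h1 : 1 ∉ S) :
    ∃ K : FiniteIndexNormalSubgroup G, ∀ g ∈ S, g ∉ K := by
  have : Finite S := hS
  choose N hN using fun g : S =>
    exists_finiteIndexNormalSubgroup_notMem g.1 (ne_of_mem_of_not_mem g.2 h1)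
  have : (⨅ g, (N g).toSubgroup).Normal := Subgroup.normal_iInf_normal fun _ => inferInstance
  have : (⨅ g, (N g).toSubgroup).FiniteIndex := Subgroup.finiteIndex_iInf fun _ => inferInstance
  exact ⟨.ofSubgroup (⨅ g, (N g).toSubgroup), fun g hg hgK =>
    hN ⟨g, hg⟩ (Subgroup.mem_iInf.1 hgK ⟨g, hg⟩)⟩

theorem exists_injOn_mk {S : Set G} (hS : S.Finite) :
    ∃ K : FiniteIndexNormalSubgroup G, S.InjOn (QuotientGroup.mk : G → G ⧸ K.toSubgroup) := by
  obtain ⟨K, hK⟩ := exists_forall_notMem ((hS.inv.mul hS).sdiff (t := {1})) (by simp)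
  refine ⟨K, fun x hx y hy hxy => ?_⟩
  by_contra hne
  exact hK (x⁻¹ * y) ⟨Set.mul_mem_mul (Set.inv_mem_inv.2 hx) hy, by simpa [inv_mul_eq_one]⟩
    (QuotientGroup.eq.1 hxy)

end Group.ResiduallyFinite

instance SemidirectProduct.instFinite {N G : Type*} [Group N] [Group G] [Finite N] [Finite G]
    {φ : G →* MulAut N} : Finite (N ⋊[φ] G) :=
  Finite.of_equiv _ SemidirectProduct.equivProd.symm

theorem SemidirectProduct.residuallyFinite_of_forall_inl {N G : Type} [Group N] [Group G]
    [Group.ResiduallyFinite G] {φ : G →* MulAut N}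
    (hN : ∀ n : N, n ≠ 1 → ∃ (F : Type) (_ : Group F) (_ : Finite F) (π : N ⋊[φ] G →* F),
      π (inl n) ≠ 1) :
    Group.ResiduallyFinite (N ⋊[φ] G) := by
  refine Group.residuallyFinite_of_forall_exists_finite_monoidHom fun w hw => ?_
  by_cases hright : w.right = 1
  · obtain ⟨n, rfl⟩ : ∃ n, w = inl n :=
      ⟨w.left, by rw [← inl_left_mul_inr_right w, hright, map_one, mul_one]; rfl⟩
    exact hN n fun h => hw (by rw [h, map_one])
  · obtain ⟨K, hK⟩ := Group.exists_finiteIndexNormalSubgroup_notMem w.right hright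
    exact ⟨G ⧸ K.toSubgroup, inferInstance, inferInstance, (QuotientGroup.mk' _).comp rightHom,
      fun h => hK ((QuotientGroup.eq_one_iff _).1 h)⟩

namespace restrictedProd

variable {G G' A H H' : Type} [Group G] [Group G'] [CommGroup A]

theorem exists_apply_ne_one {f : restrictedProd G H} (hf : f ≠ 1) : ∃ h, (f : H → G) h ≠ 1 :=
  Function.ne_iff.1 (Subtype.coe_injective.ne hf)

section single

variable [DecidableEq H]

def single (h : H) : G →* restrictedProd G H :=
  (MonoidHom.mulSingle (fun _ => G) h).codRestrict _ fun _ =>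
    (Set.finite_singleton h).subset Pi.mulSupport_mulSingle_subset

theorem coe_single (h : H) (a : G) : (single h a : H → G) = Pi.mulSingle h a := rfl

theorem single_injective (h : H) : Injective (single (G := G) h) :=
  fun _ _ hab => Pi.mulSingle_injective h (congrArg Subtype.val hab)

theorem commute_single {h h' : H} (hne : h ≠ h') (a b : G) :
    Commute (single h a) (single h' b) :=
  Subtype.ext (Pi.mulSingle_commute (f := fun _ => G) hne a b).eq

theorem shiftHom_single [Group H] (h h' : H) (a : G) :
    shiftHom G H h (single h' a) = single (h * h') a := by
  ext x
  simp [shiftHom, shiftAut, coe_single, Pi.mulSingle_apply, inv_mul_eq_iff_eq_mul]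

end single

def map (φ : G →* G') : restrictedProd G H →* restrictedProd G' H :=
  ((MonoidHom.compLeft φ H).comp (restrictedProd G H).subtype).codRestrict _ fun f =>
    f.2.subset (mulSupport_comp_subset φ.map_one _)

def pushforward (p : H → H') : restrictedProd A H →* restrictedProd A H' where
  toFun f := ⟨fun y => ∏ᶠ x ∈ p ⁻¹' {y}, (f : H → A) x, (f.2.image p).subset fun y hy => by
    by_contra hnot
    exact hy (finprod_mem_eq_one_of_forall_eq_one fun x hx => by
      by_contra hfx
      exact hnot ⟨x, hfx, hx⟩)⟩
  map_one' := Subtype.ext (funext fun _ => finprod_mem_eq_one_of_forall_eq_one fun _ _ => rfl)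
  map_mul' f g := Subtype.ext (funext fun _ =>
    finprod_mem_mul_distrib' (f.2.inter_of_right _) (g.2.inter_of_right _))

theorem pushforward_apply (p : H → H') (f : restrictedProd A H) (y : H') :
    (pushforward p f : H' → A) y = ∏ᶠ x ∈ p ⁻¹' {y}, (f : H → A) x := rfl

theorem pushforward_shiftHom [Group H] [Group H'] (p : H →* H') (h : H) (f : restrictedProd A H) :
    pushforward p (shiftHom A H h f) = shiftHom A H' (p h) (pushforward p f) := by
  ext y
  refine finprod_mem_eq_of_bijOn _ ((Equiv.mulLeft h⁻¹).bijOn fun x => ?_) fun _ _ => rfl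
  simp [eq_inv_mul_iff_mul_eq]

theorem pushforward_apply_of_injOn (p : H → H') (f : restrictedProd A H) (h₀ : H)
    (hp : (insert h₀ (mulSupport (f : H → A))).InjOn p) :
    (pushforward p f : H' → A) (p h₀) = (f : H → A) h₀ := by
  rw [pushforward_apply, finprod_mem_def, finprod_eq_single _ h₀ fun x hx => ?_]
  · exact Set.mulIndicator_of_mem (s := p ⁻¹' {p h₀}) rfl _
  refine Set.mulIndicator_apply_eq_one.2 fun hxh₀ => ?_
  by_contra hfx
  exact hx (hp (Set.mem_insert_of_mem _ hfx) (Set.mem_insert _ _) hxh₀)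

end restrictedProd

namespace RWreath

open restrictedProd

variable {G G' A H H' : Type} [Group G] [Group G'] [CommGroup A] [Group H] [Group H']

def mapLeft (φ : G →* G') : RWreath G H →* RWreath G' H :=
  SemidirectProduct.map (restrictedProd.map φ) (MonoidHom.id H) fun _ => rfl

def mapRight (p : H →* H') : RWreath A H →* RWreath A H' :=
  SemidirectProduct.map (pushforward p) p fun h => MonoidHom.ext (pushforward_shiftHom p h)

theorem commute_of_residuallyFinite [Infinite H] [Group.ResiduallyFinite (RWreath G H)]
    (a b : G) : Commute a b := by
  classical
  by_contra hab
  let ι (h : H) : G →* RWreath G H := inl.comp (single h)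
  have hι : ∀ h, Injective (ι h) := fun h => inl_injective.comp (single_injective h)
  have hz : ι 1 ⁅a, b⁆ ≠ 1 := by
    rw [Ne, ← map_one (ι 1), (hι 1).eq_iff, commutatorElement_eq_one_iff_commute]
    exact hab
  obtain ⟨N, hN⟩ := Group.exists_finiteIndexNormalSubgroup_notMem _ hz
  obtain ⟨h, hh, hhN⟩ := Subgroup.exists_ne_one_map_mem_of_infinite inr N.toSubgroup
  have hconj : inr h * ι 1 b * (inr h)⁻¹ = ι h b := by
    simp only [ι, MonoidHom.comp_apply, ← map_inv, ← inl_aut, shiftHom_single, mul_one]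
  refine hN ?_
  rw [map_commutatorElement]
  exact Subgroup.commutatorElement_mem_of_commute_conj hhN
    (hconj ▸ (commute_single hh.symm a b).map inl)

instance residuallyFinite_of_finite [Group.ResiduallyFinite G] [Finite H] :
    Group.ResiduallyFinite (RWreath G H) := by
  refine residuallyFinite_of_forall_inl fun f hf => ?_
  obtain ⟨h₀, hh₀⟩ := exists_apply_ne_one hf
  obtain ⟨M, hM⟩ := Group.exists_finiteIndexNormalSubgroup_notMem _ hh₀
  exact ⟨RWreath (G ⧸ M.toSubgroup) H, inferInstance, inferInstance,
    mapLeft (QuotientGroup.mk' _), fun h => hM ((QuotientGroup.eq_one_iff _).1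
      (congrArg (fun w => (w.left : H → G ⧸ M.toSubgroup) h₀) h))⟩

instance residuallyFinite_of_commGroup [Group.ResiduallyFinite A] [Group.ResiduallyFinite H] :
    Group.ResiduallyFinite (RWreath A H) := by
  refine residuallyFinite_of_forall_inl fun f hf => ?_
  obtain ⟨h₀, hh₀⟩ := exists_apply_ne_one hf
  obtain ⟨M, hM⟩ := Group.exists_finiteIndexNormalSubgroup_notMem _ hh₀
  obtain ⟨K, hK⟩ := Group.ResiduallyFinite.exists_injOn_mk (f.2.insert h₀)
  refine ⟨RWreath (A ⧸ M.toSubgroup) (H ⧸ K.toSubgroup), inferInstance, inferInstance,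
    (mapLeft (QuotientGroup.mk' _)).comp (mapRight (QuotientGroup.mk' _)), fun h => hM ?_⟩
  have hval := congrArg (fun w => (w.left : H ⧸ K.toSubgroup → A ⧸ M.toSubgroup) h₀) h
  rw [← FiniteIndexNormalSubgroup.mem_toSubgroup_iff, ← QuotientGroup.eq_one_iff,
    ← pushforward_apply_of_injOn _ f h₀ hK]
  exact hval

end RWreath

theorem wreath_residuallyFinite_iff (G H : Type) [Group G] [Group H]
    (hG : ResiduallyFinite G) (hH : ResiduallyFinite H) :
    ResiduallyFinite (RWreath G H) ↔ (Finite H ∨ ∀ a b : G, a * b = b * a) := by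
  rw [residuallyFinite_iff_group_residuallyFinite] at hG hH ⊢
  constructor
  · refine fun _ => or_iff_not_imp_left.2 fun hH_inf => ?_
    have : Infinite H := not_finite_iff_infinite.1 hH_inf
    exact fun a b => (RWreath.commute_of_residuallyFinite (H := H) a b).eq
  · rintro (hH_fin | hcomm)
    · exact RWreath.residuallyFinite_of_finite
    · let _ : CommGroup G := { ‹Group G› with mul_comm := hcomm }
      exact RWreath.residuallyFinite_of_commGroup
end
end

section
/- Let G be an abelian group, K a subgroup of G, H a group acting transitively on a set X, and x₀ ∈ X. In the permutational wreath product G ≀_X H = (⊕_X G) ⋊ H, the normal closure of the set {(δ_k, 1) : k ∈ K}, where δ_k is the function supported at x₀ with value k, equals the subgroup {(f, 1) : f(x) ∈ K for all x ∈ X}. -/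
/-!
Statement 8: Let `G` be an abelian group, `K ≤ G` a subgroup, `H` a group acting
transitively on a set `X`, and `x₀ ∈ X`.  In the permutational wreath product
`G ≀_X H = (⊕_X G) ⋊ H`, the normal closure of `{(δ_k, 1) : k ∈ K}` (where `δ_k` is the
finitely supported function with value `k` at `x₀` and `0` elsewhere) equals the subgroup
`{(f, 1) : f(x) ∈ K for all x ∈ X}`.
-/

noncomputable section

/-- The bridge from additive automorphisms of `A` to multiplicative automorphisms of
`Multiplicative A`. -/
def bridge {A : Type} [AddCommGroup A] : Multiplicative (AddAut A) →* MulAut (Multiplicative A) where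
  toFun e := AddEquiv.toMultiplicative (Multiplicative.toAdd e)
  map_one' := rfl
  map_mul' _ _ := rfl

/-- The permutation action of `H` on `⊕_X G`: `(h · f)(x) = f (h⁻¹ · x)`. -/
def shiftHomP (G X H : Type) [AddCommGroup G] [Group H] [MulAction H X] :
    H →* MulAut (Multiplicative (X →₀ G)) :=
  bridge.comp (@DistribMulAction.toAddAut H (X →₀ G) _ _ Finsupp.comapDistribMulAction)

/-- The permutational wreath product `G ≀_X H = (⊕_X G) ⋊ H`. -/
abbrev PWreath (G X H : Type) [AddCommGroup G] [Group H] [MulAction H X] : Type :=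
  Multiplicative (X →₀ G) ⋊[shiftHomP G X H] H

/-- The subgroup `⊕_X K = {(f, 1) : f(x) ∈ K for all x ∈ X}` of `G ≀_X H`. -/
def oplusK (G X H : Type) [AddCommGroup G] [Group H] [MulAction H X] (K : AddSubgroup G) :
    Subgroup (PWreath G X H) where
  carrier := {w | w.right = 1 ∧ ∀ x : X, Multiplicative.toAdd w.left x ∈ K}
  one_mem' := ⟨rfl, fun x => by simpa using K.zero_mem⟩
  mul_mem' := by
    rintro a b ⟨ha1, ha2⟩ ⟨hb1, hb2⟩
    refine ⟨by simp [SemidirectProduct.mul_right, ha1, hb1], fun x => ?_⟩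
    rw [SemidirectProduct.mul_left, ha1, map_one]
    simpa using K.add_mem (ha2 x) (hb2 x)
  inv_mem' := by
    rintro a ⟨ha1, ha2⟩
    refine ⟨by simp [SemidirectProduct.inv_right, ha1], fun x => ?_⟩
    rw [SemidirectProduct.inv_left, ha1]
    simpa using K.neg_mem (ha2 x)

/- Since the base `⊕_X G` is abelian, conjugating `(f, 1)` by `(f', h)` gives `(h · f, 1)`.
Hence `⊕_X K` is normal, and conjugating `(δ_k, 1)` by `h` gives the point mass `k` at `h · x₀`;
by transitivity every point mass with value in `K` lies in the normal closure, and these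
generate `⊕_X K`. -/

namespace SemidirectProduct

theorem eq_inl_left_of_right_eq_one {N G : Type*} [Group N] [Group G] {φ : G →* MulAut N}
    {w : N ⋊[φ] G} (hw : w.right = 1) :
    w = inl w.left := by
  rw [← inl_left_mul_inr_right w, hw, map_one, mul_one, left_inl]

theorem conj_inl {N G : Type*} [CommGroup N] [Group G] {φ : G →* MulAut N}
    (c : N ⋊[φ] G) (n : N) :
    c * inl n * c⁻¹ = inl (φ c.right n) := by
  ext
  · simp only [mul_left, inv_left, mul_right, left_inl, right_inl, mul_one, map_inv,
      MulAut.apply_inv_self, mul_comm c.left, mul_inv_cancel_right]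
  · simp [mul_right, inv_right]

end SemidirectProduct

open SemidirectProduct

section PWreath

attribute [local instance] Finsupp.comapSMul Finsupp.comapMulAction Finsupp.comapDistribMulAction

variable {G X H : Type} [AddCommGroup G] [Group H] [MulAction H X]

theorem shiftHomP_apply_apply (h : H) (f : Multiplicative (X →₀ G)) (x : X) :
    Multiplicative.toAdd (shiftHomP G X H h f) x = Multiplicative.toAdd f (h⁻¹ • x) :=
  Finsupp.comapSMul_apply h (Multiplicative.toAdd f) x

theorem shiftHomP_single (h : H) (x : X) (k : G) :
    shiftHomP G X H h (Multiplicative.ofAdd (Finsupp.single x k))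
      = Multiplicative.ofAdd (Finsupp.single (h • x) k) :=
  congrArg Multiplicative.ofAdd (Finsupp.comapSMul_single h x k)

theorem inl_mem_oplusK_iff {K : AddSubgroup G} {f : Multiplicative (X →₀ G)} :
    (inl f : PWreath G X H) ∈ oplusK G X H K ↔ ∀ x, Multiplicative.toAdd f x ∈ K :=
  and_iff_right rfl

instance oplusK_normal (K : AddSubgroup G) : (oplusK G X H K).Normal where
  conj_mem w hw c := by
    rw [eq_inl_left_of_right_eq_one hw.1, conj_inl, inl_mem_oplusK_iff]
    exact fun x => by rw [shiftHomP_apply_apply]; exact hw.2 _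

theorem inl_single_mem_normalClosure [MulAction.IsPretransitive H X] {x₀ : X}
    {K : AddSubgroup G} {k : G} (hk : k ∈ K) (x : X) :
    (inl (Multiplicative.ofAdd (Finsupp.single x k)) : PWreath G X H) ∈ Subgroup.normalClosure
      {w : PWreath G X H | ∃ k ∈ K, w = ⟨Multiplicative.ofAdd (Finsupp.single x₀ k), 1⟩} := by
  obtain ⟨h, rfl⟩ := MulAction.exists_smul_eq H x₀ x
  rw [← shiftHomP_single, inl_aut]
  refine Subgroup.normalClosure_normal.conj_mem _ (Subgroup.subset_normalClosure ?_) _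
  exact ⟨k, hk, rfl⟩

theorem inl_mem_normalClosure [MulAction.IsPretransitive H X] {x₀ : X}
    {K : AddSubgroup G} {f : X →₀ G} (hf : ∀ x, f x ∈ K) :
    (inl (Multiplicative.ofAdd f) : PWreath G X H) ∈ Subgroup.normalClosure
      {w : PWreath G X H | ∃ k ∈ K, w = ⟨Multiplicative.ofAdd (Finsupp.single x₀ k), 1⟩} := by
  classical
  rw [← Subgroup.mem_comap, ← f.sum_single, Finsupp.sum, ofAdd_sum]
  exact Subgroup.prod_mem _ fun x _ => inl_single_mem_normalClosure (hf x) x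

end PWreath

theorem normalClosure_delta_eq_oplusK (G X H : Type) [AddCommGroup G] [Group H]
    [MulAction H X] [MulAction.IsPretransitive H X] (x₀ : X) (K : AddSubgroup G) :
    Subgroup.normalClosure
        {w : PWreath G X H | ∃ k ∈ K, w = ⟨Multiplicative.ofAdd (Finsupp.single x₀ k), 1⟩}
      = oplusK G X H K := by
  refine le_antisymm (Subgroup.normalClosure_le_normal ?_) fun w hw => ?_
  · rintro _ ⟨k, hk, rfl⟩
    refine (inl_mem_oplusK_iff (f := Multiplicative.ofAdd _)).2 fun x => ?_
    rcases Finsupp.single_apply_mem (a := x₀) (b := k) x with h | h <;> rw [toAdd_ofAdd, h]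
    exacts [K.zero_mem, hk]
  · rw [eq_inl_left_of_right_eq_one hw.1]
    exact inl_mem_normalClosure hw.2

end
end

section
/- Let X be a set and k : X × X → ℝ≥0 a function. The following are equivalent: (1) there exist a measure space (Ω,ν) and a map f : X → L¹(Ω,ν) such that k(x,y) = ‖f(x) − f(y)‖₁ for all x,y ∈ X; (2) for every p ≥ 1 there exist a measure space (Ω_p,ν_p) and a map f : X → L^p(Ω_p,ν_p) such that k(x,y)^{1/p} = ‖f(x) − f(y)‖_p for all x,y ∈ X; (3) k = d_μ for some measured walls structure (X, μ), i.e. there is a Borel measure μ on the power set 2^X such that for all x,y ∈ X the set {A ⊆ X : A cuts {x,y}} has finite measure equal to k(x,y). -/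
/-!
Every `L¹` function is the integral of the indicators of its strict superlevel sets, so for
`g x = f x` the map `(ω, t) ↦ {z | t < g z ω}` pushes `ν ⊗ volume` forward to a measure on `2^X`
giving each cut `{A | A x ≠ A y}` the mass `∫ |g x - g y| dν`. This pushforward lives only on the
product σ-algebra, which is smaller than the Borel one when `X` is uncountable; since `2^X` is
compact and totally disconnected, its values on clopen sets extend to a Borel measure by the
construction of `MeasureTheory.Content.measure`, with clopen sets in place of compact ones.
Conversely, `x ↦ 1_{A x} - 1_{A x₀}` embeds a measured walls space in every `Lᵖ(2^X, μ)`, with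
`‖f x - f y‖ₚ ^ p = μ {A | A x ≠ A y}`.
-/

open MeasureTheory Set
open scoped ENNReal NNReal

noncomputable section

lemma addContent_inter_add_sdiff {α G : Type*} [AddCommMonoid G] {C : Set (Set α)}
    (hC : IsSetRing C) (m : AddContent G C) {s t : Set α} (hs : s ∈ C) (ht : t ∈ C) :
    m (s ∩ t) + m (s \ t) = m s := by
  rw [← addContent_union hC (hC.inter_mem hs ht) (hC.sdiff_mem hs ht)
    (disjoint_sdiff_right.mono_left inter_subset_right), inter_union_sdiff]

section ClopenContent

variable {Z : Type*} [TopologicalSpace Z]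

lemma isSetRing_isClopen : IsSetRing {s : Set Z | IsClopen s} :=
  ⟨isClopen_empty, fun _ _ hs ht => hs.union ht, fun _ _ hs ht => hs.diff ht⟩

variable (m : AddContent ℝ≥0∞ {s : Set Z | IsClopen s})

def clopenInnerContent (U : Set Z) : ℝ≥0∞ :=
  ⨆ D ∈ {D : Set Z | IsClopen D ∧ D ⊆ U}, m D

variable {m}

lemma le_clopenInnerContent {D U : Set Z} (hD : IsClopen D) (hDU : D ⊆ U) :
    m D ≤ clopenInnerContent m U :=
  le_biSup (fun D => m D) ⟨hD, hDU⟩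

lemma clopenInnerContent_add_le {U : Set Z} {a c : ℝ≥0∞}
    (h : ∀ D, IsClopen D → D ⊆ U → m D + a ≤ c) : clopenInnerContent m U + a ≤ c := by
  rw [clopenInnerContent,
    ENNReal.biSup_add (s := {D | IsClopen D ∧ D ⊆ U}) ⟨∅, isClopen_empty, empty_subset U⟩]
  exact iSup₂_le fun D hD => h D hD.1 hD.2

lemma clopenInnerContent_mono {U V : Set Z} (hUV : U ⊆ V) :
    clopenInnerContent m U ≤ clopenInnerContent m V :=
  iSup₂_le fun _ hD => le_clopenInnerContent hD.1 (hD.2.trans hUV)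

lemma clopenInnerContent_of_isClopen {D : Set Z} (hD : IsClopen D) :
    clopenInnerContent m D = m D :=
  le_antisymm (iSup₂_le fun _ hE => addContent_mono isSetRing_isClopen.isSetSemiring hE.1 hD hE.2)
    (le_clopenInnerContent hD subset_rfl)

lemma clopenInnerContent_empty : clopenInnerContent m (∅ : Set Z) = 0 := by
  rw [clopenInnerContent_of_isClopen isClopen_empty, addContent_empty]

variable [CompactSpace Z] [T2Space Z] [TotallyDisconnectedSpace Z]

lemma exists_isClopen_subset_sdiff_subset {D U V : Set Z} (hD : IsClosed D) (hU : IsOpen U)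
    (hV : IsOpen V) (hDUV : D ⊆ U ∪ V) : ∃ C, IsClopen C ∧ C ⊆ U ∧ D \ C ⊆ V := by
  obtain ⟨C, hC, hDC, hCU⟩ := exists_clopen_of_closed_subset_open (hD.sdiff hV) hU
    (fun z hz => (hDUV hz.1).resolve_right hz.2)
  exact ⟨C, hC, hCU, fun z hz => by_contra fun hzV => hz.2 (hDC ⟨hz.1, hzV⟩)⟩

lemma le_sum_clopenInnerContent {V : ℕ → Set Z} (hV : ∀ n, IsOpen (V n)) (s : Finset ℕ)
    {D : Set Z} (hD : IsClopen D) (hDV : D ⊆ ⋃ n ∈ s, V n) :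
    m D ≤ ∑ n ∈ s, clopenInnerContent m (V n) := by
  classical
  induction s using Finset.induction generalizing D with
  | empty =>
    simp only [Finset.notMem_empty, iUnion_of_empty, iUnion_empty, subset_empty_iff] at hDV
    simp [hDV]
  | insert a s ha ih =>
    rw [Finset.set_biUnion_insert] at hDV
    obtain ⟨C, hC, hCV, hDCV⟩ := exists_isClopen_subset_sdiff_subset hD.isClosed (hV a)
      (isOpen_biUnion fun n _ => hV n) hDV
    rw [← addContent_inter_add_sdiff isSetRing_isClopen m hD hC, Finset.sum_insert ha]
    exact add_le_add (le_clopenInnerContent (hD.inter hC) (inter_subset_right.trans hCV))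
      (ih (hD.diff hC) hDCV)

lemma clopenInnerContent_iUnion_le {V : ℕ → Set Z} (hV : ∀ n, IsOpen (V n)) :
    clopenInnerContent m (⋃ n, V n) ≤ ∑' n, clopenInnerContent m (V n) := by
  refine iSup₂_le fun D ⟨hD, hDV⟩ => ?_
  obtain ⟨s, hs⟩ := hD.isClosed.isCompact.elim_finite_subcover V hV hDV
  exact (le_sum_clopenInnerContent hV s hD hs).trans (ENNReal.sum_le_tsum s)

variable (m) in
def clopenOuterMeasure : OuterMeasure Z :=
  inducedOuterMeasure (fun U _ => clopenInnerContent m U) isOpen_empty clopenInnerContent_empty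

lemma clopenOuterMeasure_of_isOpen {U : Set Z} (hU : IsOpen U) :
    clopenOuterMeasure m U = clopenInnerContent m U :=
  inducedOuterMeasure_eq' (fun _ => isOpen_iUnion) (fun _ => clopenInnerContent_iUnion_le)
    (fun _ _ _ _ => clopenInnerContent_mono) hU

lemma borel_le_caratheodory_clopenOuterMeasure :
    borel Z ≤ (clopenOuterMeasure m).caratheodory := by
  refine MeasurableSpace.generateFrom_le fun U hU => ?_
  rw [clopenOuterMeasure, inducedOuterMeasure_caratheodory (PU := fun _ => isOpen_iUnion)
    (msU := fun _ => clopenInnerContent_iUnion_le)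
    (m_mono := fun _ _ _ _ => clopenInnerContent_mono)]
  intro T hT
  change clopenOuterMeasure m (T ∩ U) + clopenOuterMeasure m (T \ U) ≤ clopenOuterMeasure m T
  rw [clopenOuterMeasure_of_isOpen (hT.inter hU), clopenOuterMeasure_of_isOpen hT]
  refine clopenInnerContent_add_le fun D₁ hD₁ hD₁TU => ?_
  calc m D₁ + clopenOuterMeasure m (T \ U) ≤ m D₁ + clopenInnerContent m (T \ D₁) := by
        rw [← clopenOuterMeasure_of_isOpen (hT.sdiff hD₁.isClosed)]
        gcongr
        exact hD₁TU.trans inter_subset_right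
    _ ≤ clopenInnerContent m T := by
        rw [add_comm]
        refine clopenInnerContent_add_le fun D₂ hD₂ hD₂T => ?_
        rw [add_comm, ← addContent_union isSetRing_isClopen hD₁ hD₂
          (disjoint_sdiff_right.mono_right hD₂T)]
        exact le_clopenInnerContent (hD₁.union hD₂)
          (union_subset (hD₁TU.trans inter_subset_left) (hD₂T.trans sdiff_subset))

variable (m) in
def clopenMeasure : @Measure Z (borel Z) :=
  @OuterMeasure.toMeasure Z (borel Z) (clopenOuterMeasure m)
    borel_le_caratheodory_clopenOuterMeasure

lemma clopenMeasure_apply_of_isClopen {D : Set Z} (hD : IsClopen D) : clopenMeasure m D = m D := by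
  rw [clopenMeasure, @toMeasure_apply Z (borel Z) _ _ _
    (MeasurableSpace.measurableSet_generateFrom hD.isOpen), clopenOuterMeasure_of_isOpen hD.isOpen,
    clopenInnerContent_of_isClopen hD]

end ClopenContent

lemma IsCompact.measurableSet_pi_of_isOpen {ι : Type*} {E : ι → Type*}
    [∀ i, TopologicalSpace (E i)] [∀ i, MeasurableSpace (E i)] [∀ i, OpensMeasurableSpace (E i)]
    {U : Set (∀ i, E i)} (hUc : IsCompact U) (hUo : IsOpen U) : MeasurableSet U := by
  obtain ⟨s, rfl⟩ := eq_sUnion_finset_of_isTopologicalBasis_of_isCompact_open _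
    (isTopologicalBasis_pi fun _ => TopologicalSpace.isTopologicalBasis_opens) U hUc hUo
  refine MeasurableSet.sUnion (s.finite_toSet.image _).countable ?_
  rintro _ ⟨⟨_, u, F, hu, rfl⟩, -, rfl⟩
  exact MeasurableSet.pi F.countable_toSet fun i hi => (hu i hi).measurableSet

section Walls

variable {X : Type*}

lemma isClopen_setOf_apply_ne (x y : X) : IsClopen {A : X → Bool | A x ≠ A y} :=
  show IsClopen ((fun A : X → Bool => (A x, A y)) ⁻¹' {p | p.1 ≠ p.2}) from
    (isClopen_discrete _).preimage ((continuous_apply x).prodMk (continuous_apply y))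

lemma measurableSet_setOf_apply_ne (x y : X) : MeasurableSet {A : X → Bool | A x ≠ A y} :=
  (measurableSet_eq_fun (measurable_pi_apply x) (measurable_pi_apply y)).compl

lemma symmDiff_setOf_apply_eq_true (x y : X) :
    symmDiff {A : X → Bool | A x = true} {A | A y = true} = {A | A x ≠ A y} := by
  ext A
  cases hx : A x <;> cases hy : A y <;> simp [mem_symmDiff, hx, hy]

variable {Ω : Type*} [MeasurableSpace Ω]

def superlevelSet (g : X → Ω → ℝ) (q : Ω × ℝ) : X → Bool :=
  fun z => decide (q.2 < g z q.1)

lemma measurable_superlevelSet {g : X → Ω → ℝ} (hg : ∀ z, Measurable (g z)) :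
    Measurable (superlevelSet g) := by
  refine measurable_pi_lambda _ fun z => measurable_to_countable' fun b => ?_
  have h : MeasurableSet {q : Ω × ℝ | q.2 < g z q.1} :=
    measurableSet_lt measurable_snd ((hg z).comp measurable_fst)
  cases b
  · convert h.compl using 1
    ext q
    simp [superlevelSet]
  · convert h using 1
    ext q
    simp [superlevelSet]

lemma setOf_not_lt_iff_lt_eq_Ico (a b : ℝ) :
    {t : ℝ | ¬(t < a ↔ t < b)} = Ico (min a b) (max a b) := by
  ext t
  simp only [mem_ofPred_eq, mem_Ico, min_le_iff, lt_max_iff]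
  grind

lemma prod_volume_preimage_superlevelSet_setOf_apply_ne (ν : Measure Ω) {g : X → Ω → ℝ}
    (hg : ∀ z, Measurable (g z)) (x y : X) :
    (ν.prod volume) (superlevelSet g ⁻¹' {A | A x ≠ A y}) = ∫⁻ ω, ‖g x ω - g y ω‖ₑ ∂ν := by
  rw [Measure.prod_apply (measurable_superlevelSet hg (measurableSet_setOf_apply_ne x y))]
  refine lintegral_congr fun ω => ?_
  have hfib : Prod.mk ω ⁻¹' (superlevelSet g ⁻¹' {A | A x ≠ A y})
      = {t : ℝ | ¬(t < g x ω ↔ t < g y ω)} := by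
    ext t
    simp [superlevelSet]
  rw [hfib, setOf_not_lt_iff_lt_eq_Ico, Real.volume_Ico, max_sub_min_eq_abs',
    Real.enorm_eq_ofReal_abs]

end Walls

lemma norm_indicator_one_sub_indicator_one {Ω : Type*} (s t : Set Ω) (ω : Ω) :
    ‖s.indicator (fun _ => (1 : ℝ)) ω - t.indicator (fun _ => 1) ω‖
      = ‖(symmDiff s t).indicator (fun _ => (1 : ℝ)) ω‖ := by
  by_cases hs : ω ∈ s <;> by_cases ht : ω ∈ t <;> simp [hs, ht, mem_symmDiff]

section Embeddings

variable {X Ω : Type*} [MeasurableSpace Ω]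

theorem exists_borel_measure_setOf_apply_ne_eq_enorm_sub (ν : Measure Ω) (f : X → Lp ℝ 1 ν) :
    ∃ μ : @Measure (X → Bool) (borel (X → Bool)),
      ∀ x y, μ {A | A x ≠ A y} = ‖f x - f y‖ₑ := by
  have hf : ∀ x, Measurable (f x) := fun x => (Lp.stronglyMeasurable (f x)).measurable
  let μ₀ : Measure (X → Bool) := (ν.prod volume).map (superlevelSet fun x => f x)
  let m : AddContent ℝ≥0∞ {D : Set (X → Bool) | IsClopen D} :=
    isSetRing_isClopen.addContent_of_union (fun D => μ₀ D) measure_empty fun _ ht hst =>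
      measure_union hst (ht.isClosed.isCompact.measurableSet_pi_of_isOpen ht.isOpen)
  refine ⟨clopenMeasure m, fun x y => ?_⟩
  rw [clopenMeasure_apply_of_isClopen (isClopen_setOf_apply_ne x y)]
  change μ₀ _ = _
  rw [Measure.map_apply (measurable_superlevelSet hf) (measurableSet_setOf_apply_ne x y),
    prod_volume_preimage_superlevelSet_setOf_apply_ne ν hf, Lp.enorm_def,
    eLpNorm_one_eq_lintegral_enorm]
  refine lintegral_congr_ae ?_
  filter_upwards [Lp.coeFn_sub (f x) (f y)] with ω h
  rw [h, Pi.sub_apply]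

theorem exists_Lp_enorm_sub_eq_measure_symmDiff (μ : Measure Ω) {S : X → Set Ω}
    (hS : ∀ x, MeasurableSet (S x)) (hfin : ∀ x y, μ (symmDiff (S x) (S y)) ≠ ∞)
    {p : ℝ≥0∞} (hp0 : p ≠ 0) (hpt : p ≠ ∞) :
    ∃ f : X → Lp ℝ p μ, ∀ x y, ‖f x - f y‖ₑ = μ (symmDiff (S x) (S y)) ^ (1 / p.toReal) := by
  rcases isEmpty_or_nonempty X with _ | ⟨⟨x₀⟩⟩
  · exact ⟨isEmptyElim, isEmptyElim⟩
  let g : X → Ω → ℝ := fun x ω =>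
    (S x).indicator (fun _ => 1) ω - (S x₀).indicator (fun _ => 1) ω
  have hg : ∀ x, MemLp (g x) p μ := fun x =>
    (memLp_indicator_const p ((hS x).symmDiff (hS x₀)) (1 : ℝ) (Or.inr (hfin x x₀))).congr_norm
      ((measurable_const.indicator (hS x)).sub
        (measurable_const.indicator (hS x₀))).aestronglyMeasurable
      (ae_of_all _ fun ω => (norm_indicator_one_sub_indicator_one _ _ ω).symm)
  refine ⟨fun x => (hg x).toLp, fun x y => ?_⟩
  have hsub : ∀ᵐ ω ∂μ, ‖((hg x).toLp - (hg y).toLp : Lp ℝ p μ) ω‖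
      = ‖(symmDiff (S x) (S y)).indicator (fun _ => (1 : ℝ)) ω‖ := by
    filter_upwards [Lp.coeFn_sub (hg x).toLp (hg y).toLp, (hg x).coeFn_toLp, (hg y).coeFn_toLp]
      with ω h hx hy
    rw [h, Pi.sub_apply, hx, hy, sub_sub_sub_cancel_right, norm_indicator_one_sub_indicator_one]
  rw [Lp.enorm_def, eLpNorm_congr_norm_ae hsub,
    eLpNorm_indicator_const ((hS x).symmDiff (hS y)) hp0 hpt, enorm_one, one_mul]

end Embeddings

theorem exists_measuredWalls_of_L1 {X Ω : Type*} [MeasurableSpace Ω] (k : X → X → ℝ≥0)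
    (ν : Measure Ω) (f : X → Lp ℝ 1 ν) (hf : ∀ x y, (k x y : ℝ) = ‖f x - f y‖) :
    ∃ μ : @Measure (X → Bool) (borel (X → Bool)), ∀ x y, μ {A | A x ≠ A y} = k x y := by
  obtain ⟨μ, hμ⟩ := exists_borel_measure_setOf_apply_ne_eq_enorm_sub ν f
  exact ⟨μ, fun x y => by rw [hμ, ← ofReal_norm, ← hf, ENNReal.ofReal_coe_nnreal]⟩

theorem exists_Lp_of_measuredWalls {X : Type} (k : X → X → ℝ≥0)
    (μ : @Measure (X → Bool) (borel (X → Bool)))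
    (hμ : ∀ x y : X, μ {A | A x ≠ A y} = k x y) {p : ℝ≥0∞} (hp0 : p ≠ 0)
    (hpt : p ≠ ∞) :
    ∃ (Ω : Type) (_ : MeasurableSpace Ω) (ν : Measure Ω) (f : X → Lp ℝ p ν),
      ∀ x y : X, (k x y : ℝ) ^ (1 / p.toReal) = ‖f x - f y‖ := by
  let _ : MeasurableSpace (X → Bool) := borel (X → Bool)
  have _ : BorelSpace (X → Bool) := ⟨rfl⟩
  have hS : ∀ x : X, MeasurableSet {A : X → Bool | A x = true} := fun x =>
    show MeasurableSet ((fun A : X → Bool => A x) ⁻¹' {true}) from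
      (continuous_apply x).measurable (measurableSet_singleton true)
  obtain ⟨f, hf⟩ := exists_Lp_enorm_sub_eq_measure_symmDiff μ hS
    (fun x y => by simp [symmDiff_setOf_apply_eq_true, hμ]) hp0 hpt
  refine ⟨X → Bool, borel _, μ, f, fun x y => ?_⟩
  rw [Lp.norm_def, ← Lp.enorm_def, hf, symmDiff_setOf_apply_eq_true, hμ, ← ENNReal.toReal_rpow,
    ENNReal.coe_toReal]

theorem measured_walls_tfae (X : Type) (k : X → X → NNReal) :
    ((∃ (Ω : Type) (_ : MeasurableSpace Ω) (ν : Measure Ω) (f : X → Lp ℝ 1 ν),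
        ∀ x y : X, (k x y : ℝ) = ‖f x - f y‖) ↔
      (∃ μ : @Measure (X → Bool) (borel (X → Bool)),
        ∀ x y : X, μ {A | A x ≠ A y} = (k x y : ENNReal))) ∧
    ((∀ p : ℝ, 1 ≤ p →
        ∃ (Ω : Type) (_ : MeasurableSpace Ω) (ν : Measure Ω)
          (f : X → Lp ℝ (ENNReal.ofReal p) ν),
          ∀ x y : X, (k x y : ℝ) ^ (1 / p) = ‖f x - f y‖) ↔
      (∃ μ : @Measure (X → Bool) (borel (X → Bool)),
        ∀ x y : X, μ {A | A x ≠ A y} = (k x y : ENNReal))) := by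
  refine ⟨⟨fun ⟨_, _, ν, f, hf⟩ => exists_measuredWalls_of_L1 k ν f hf, fun ⟨μ, hμ⟩ => ?_⟩,
    ⟨fun hLp => ?_, fun ⟨μ, hμ⟩ p hp => ?_⟩⟩
  · simpa using exists_Lp_of_measuredWalls k μ hμ one_ne_zero ENNReal.one_ne_top
  · have hL1 := hLp 1 le_rfl
    rw [ENNReal.ofReal_one] at hL1
    obtain ⟨_, _, ν, f, hf⟩ := hL1
    exact exists_measuredWalls_of_L1 k ν f fun x y => by simpa using hf x y
  · have hp0 : ENNReal.ofReal p ≠ 0 := (ENNReal.ofReal_pos.2 (zero_lt_one.trans_le hp)).ne'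
    simpa [ENNReal.toReal_ofReal (zero_le_one.trans hp)] using
      exists_Lp_of_measuredWalls k μ hμ hp0 ENNReal.ofReal_ne_top
end
end

section
/- Let X and W be sets, let φ : W × W → Finset X be an 𝒜-gauge with φ(w,w) = ∅ for all w ∈ W, and let μ be a Borel measure on 2^X giving a measured walls structure on X. Define k : (W × X) × (W × X) → ℝ≥0∞ by k((w₁,x₁),(w₂,x₂)) = μ({A ⊆ X : A cuts the set φ(w₁,w₂) ∪ {x₁,x₂}}). Then k is finite everywhere, k((w,x),(w,x)) = 0, k is symmetric, and k satisfies the triangle inequality: k((w₁,x₁),(w₃,x₃)) ≤ k((w₁,x₁),(w₂,x₂)) + k((w₂,x₂),(w₃,x₃)) for all w₁,w₂,w₃ ∈ W and x₁,x₂,x₃ ∈ X. -/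
/-!
Statement 13: Let `X, W` be sets, `φ : W × W → Finset X` an `𝒜`-gauge (symmetric,
subadditive) with `φ(w,w) = ∅`, and `μ` a Borel measure on `2^X = (X → Bool)` giving a
measured walls structure on `X`.  Define
`k((w₁,x₁),(w₂,x₂)) = μ {A : A cuts φ(w₁,w₂) ∪ {x₁,x₂}}`.  Then `k` is finite, vanishes
on the diagonal, is symmetric, and satisfies the triangle inequality.
-/

open MeasureTheory

noncomputable section

/-- `A` cuts a finite set `S`: neither `S ⊆ A` nor `S ⊆ Aᶜ`. -/
def Cuts {X : Type} (A : X → Bool) (S : Finset X) : Prop :=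
  (∃ s ∈ S, A s = true) ∧ (∃ s ∈ S, A s = false)

/-- The kernel on `W × X` lifted from a measured walls structure via an `𝒜`-gauge. -/
def gaugeKernel {X W : Type} [DecidableEq X] (φ : W → W → Finset X)
    (μ : @Measure (X → Bool) (borel (X → Bool))) (a b : W × X) : ENNReal :=
  μ {A | Cuts A (φ a.1 b.1 ∪ {a.2, b.2})}

theorem gauge_lifted_kernel (X W : Type) [DecidableEq X] (φ : W → W → Finset X)
    (hsymm : ∀ w w' : W, φ w w' = φ w' w)
    (htri : ∀ w w' w'' : W, φ w w'' ⊆ φ w w' ∪ φ w' w'')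
    (hrefl : ∀ w : W, φ w w = ∅)
    (μ : @Measure (X → Bool) (borel (X → Bool)))
    (hfin : ∀ x y : X, μ {A | A x ≠ A y} ≠ ⊤) :
    (∀ a b : W × X, gaugeKernel φ μ a b ≠ ⊤) ∧
    (∀ a : W × X, gaugeKernel φ μ a a = 0) ∧
    (∀ a b : W × X, gaugeKernel φ μ a b = gaugeKernel φ μ b a) ∧
    (∀ a b c : W × X, gaugeKernel φ μ a c ≤ gaugeKernel φ μ a b + gaugeKernel φ μ b c) := by
  refine ⟨?_, ?_, ?_, ?_⟩
  · -- finiteness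
    intro a b
    have hx : a.2 ∈ φ a.1 b.1 ∪ {a.2, b.2} := by simp
    have hsub : {A : X → Bool | Cuts A (φ a.1 b.1 ∪ {a.2, b.2})} ⊆
        ⋃ s ∈ (φ a.1 b.1 ∪ {a.2, b.2}), {A : X → Bool | A s ≠ A a.2} := by
      intro A hA
      obtain ⟨⟨s, hs, hst⟩, ⟨t, ht, htf⟩⟩ := hA
      cases h : A a.2 with
      | true => exact Set.mem_biUnion ht (by simp [htf, h])
      | false => exact Set.mem_biUnion hs (by simp [hst, h])
    have h1 : gaugeKernel φ μ a b ≤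
        ∑ s ∈ (φ a.1 b.1 ∪ {a.2, b.2}), μ {A : X → Bool | A s ≠ A a.2} :=
      (measure_mono hsub).trans (measure_biUnion_finset_le _ _)
    exact ne_top_of_le_ne_top
      (ENNReal.sum_lt_top.2 fun s _ => lt_top_iff_ne_top.2 (hfin s a.2)).ne h1
  · -- diagonal
    intro a
    have hempty : {A : X → Bool | Cuts A (φ a.1 a.1 ∪ {a.2, a.2})} = ∅ := by
      ext A
      simp [Cuts, hrefl a.1]
    unfold gaugeKernel
    rw [hempty, measure_empty]
  · -- symmetry
    intro a b
    unfold gaugeKernel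
    rw [hsymm a.1 b.1, Finset.pair_comm a.2 b.2]
  · -- triangle inequality
    intro a b c
    have hsub : {A : X → Bool | Cuts A (φ a.1 c.1 ∪ {a.2, c.2})} ⊆
        {A : X → Bool | Cuts A (φ a.1 b.1 ∪ {a.2, b.2})} ∪
        {A : X → Bool | Cuts A (φ b.1 c.1 ∪ {b.2, c.2})} := by
      intro A hA
      obtain ⟨⟨s, hs, hst⟩, ⟨t, ht, htf⟩⟩ := hA
      have hmem : ∀ u ∈ φ a.1 c.1 ∪ {a.2, c.2},
          u ∈ φ a.1 b.1 ∪ {a.2, b.2} ∨ u ∈ φ b.1 c.1 ∪ {b.2, c.2} := by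
        intro u hu
        simp only [Finset.mem_union, Finset.mem_insert, Finset.mem_singleton] at hu ⊢
        rcases hu with hu | hu | hu
        · rcases Finset.mem_union.1 (htri a.1 b.1 c.1 hu) with h | h
          · exact Or.inl (Or.inl h)
          · exact Or.inr (Or.inl h)
        · exact Or.inl (Or.inr (Or.inl hu))
        · exact Or.inr (Or.inr (Or.inr hu))
      have hb1 : b.2 ∈ φ a.1 b.1 ∪ {a.2, b.2} := by simp
      have hb2 : b.2 ∈ φ b.1 c.1 ∪ {b.2, c.2} := by simp
      cases hb : A b.2 with
      | true =>
        rcases hmem t ht with h | h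
        · exact Or.inl ⟨⟨b.2, hb1, hb⟩, ⟨t, h, htf⟩⟩
        · exact Or.inr ⟨⟨b.2, hb2, hb⟩, ⟨t, h, htf⟩⟩
      | false =>
        rcases hmem s hs with h | h
        · exact Or.inl ⟨⟨s, h, hst⟩, ⟨b.2, hb1, hb⟩⟩
        · exact Or.inr ⟨⟨s, h, hst⟩, ⟨b.2, hb2, hb⟩⟩
    exact (measure_mono hsub).trans (measure_union_le _ _)

end
end

section
/- Let H be a group acting on a set X and acting on a group W by group automorphisms, let φ : W × W → Finset X be an 𝒜-gauge which is W-invariant (φ(vw, vw') = φ(w,w') for all v,w,w' ∈ W) and H-equivariant (φ(h·w, h·w') = h·φ(w,w'), the image of φ(w,w') under x ↦ h·x), and let μ be a Borel measure on 2^X giving a measured walls structure on X which is H-invariant, i.e. for every h ∈ H the pushforward of μ under the map A ↦ h·A = {h·x : x ∈ A} equals μ. Define k((w₁,x₁),(w₂,x₂)) = μ({A ⊆ X : A cuts φ(w₁,w₂) ∪ {x₁,x₂}}), and let the semidirect product W ⋊ H act on W × X by (v,h)·(w,x) = (v·(h·w), h·x). Then k is invariant under this action: k((v,h)·(w₁,x₁),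 (v,h)·(w₂,x₂)) = k((w₁,x₁),(w₂,x₂)) for all (v,h) ∈ W ⋊ H. -/
/-!
Statement 14: Let `H` be a group acting on a set `X` and on a group `W` by automorphisms,
`φ : W × W → Finset X` a `W`-invariant, `H`-equivariant `𝒜`-gauge, and `μ` an
`H`-invariant Borel measure on `2^X = (X → Bool)` giving a measured walls structure.
Define `k((w₁,x₁),(w₂,x₂)) = μ {A : A cuts φ(w₁,w₂) ∪ {x₁,x₂}}` and let `W ⋊ H` act on
`W × X` by `(v,h)·(w,x) = (v (h·w), h·x)`.  Then `k` is invariant under this action.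
-/

open MeasureTheory

noncomputable section

lemma cuts_set_open {X : Type} (S : Finset X) :
    IsOpen {A : X → Bool | Cuts A S} := by
  have : {A : X → Bool | Cuts A S} =
      (⋃ s ∈ S, (fun A : X → Bool => A s) ⁻¹' {true}) ∩
      (⋃ s ∈ S, (fun A : X → Bool => A s) ⁻¹' {false}) := by
    ext A; simp [Cuts]
  rw [this]
  exact ((isOpen_biUnion fun s _ =>
      (isOpen_discrete _).preimage (continuous_apply s)).inter
    (isOpen_biUnion fun s _ => (isOpen_discrete _).preimage (continuous_apply s)))

theorem gauge_lifted_kernel_invariant (X W H : Type) [DecidableEq X]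
    [Group W] [Group H] [MulAction H X] [MulDistribMulAction H W]
    (φ : W → W → Finset X)
    (hsymm : ∀ w w' : W, φ w w' = φ w' w)
    (htri : ∀ w w' w'' : W, φ w w'' ⊆ φ w w' ∪ φ w' w'')
    (hWinv : ∀ v w w' : W, φ (v * w) (v * w') = φ w w')
    (hHequiv : ∀ (h : H) (w w' : W),
      φ (h • w) (h • w') = Finset.image (fun x : X => h • x) (φ w w'))
    (μ : @Measure (X → Bool) (borel (X → Bool)))
    (hfin : ∀ x y : X, μ {A | A x ≠ A y} ≠ ⊤)
    (hinv : ∀ h : H,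
      @Measure.map (X → Bool) (X → Bool) (borel (X → Bool)) (borel (X → Bool))
        (fun (A : X → Bool) => fun x : X => A (h⁻¹ • x)) μ = μ) :
    ∀ (v : W) (h : H) (w₁ w₂ : W) (x₁ x₂ : X),
      gaugeKernel φ μ (v * h • w₁, h • x₁) (v * h • w₂, h • x₂)
        = gaugeKernel φ μ (w₁, x₁) (w₂, x₂) := by
  intro v h w₁ w₂ x₁ x₂
  letI : MeasurableSpace (X → Bool) := borel (X → Bool)
  haveI : BorelSpace (X → Bool) := ⟨rfl⟩
  unfold gaugeKernel
  simp only
  have hφ : φ (v * h • w₁) (v * h • w₂) = Finset.image (fun x : X => h • x) (φ w₁ w₂) := by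
    rw [hWinv, hHequiv]
  have hset : φ (v * h • w₁) (v * h • w₂) ∪ {h • x₁, h • x₂}
      = Finset.image (fun x : X => h • x) (φ w₁ w₂ ∪ {x₁, x₂}) := by
    rw [hφ, Finset.image_union]
    congr 1
    simp [Finset.image_insert]
  rw [hset]
  set S := φ w₁ w₂ ∪ {x₁, x₂} with hS
  have hT : Measurable (fun (A : X → Bool) => fun x : X => A (h⁻¹ • x)) :=
    (continuous_pi fun x => continuous_apply (h⁻¹ • x)).measurable
  have hmeas : MeasurableSet {A : X → Bool | Cuts A (Finset.image (fun x : X => h • x) S)} :=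
    (cuts_set_open _).measurableSet
  calc μ {A | Cuts A (Finset.image (fun x : X => h • x) S)}
      = (@Measure.map (X → Bool) (X → Bool) (borel (X → Bool)) (borel (X → Bool))
          (fun (A : X → Bool) => fun x : X => A (h⁻¹ • x)) μ)
          {A | Cuts A (Finset.image (fun x : X => h • x) S)} := by rw [hinv h]
    _ = μ ((fun (A : X → Bool) => fun x : X => A (h⁻¹ • x)) ⁻¹'
          {A | Cuts A (Finset.image (fun x : X => h • x) S)}) :=
        Measure.map_apply hT hmeas
    _ = μ {A | Cuts A S} := by
        congr 1
        ext A
        simp only [Set.mem_preimage, Set.mem_setOf_eq, Cuts, Finset.mem_image]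
        constructor
        · rintro ⟨⟨_, ⟨s, hs, rfl⟩, h1⟩, ⟨_, ⟨t, ht, rfl⟩, h2⟩⟩
          exact ⟨⟨s, hs, by simpa using h1⟩, ⟨t, ht, by simpa using h2⟩⟩
        · rintro ⟨⟨s, hs, h1⟩, ⟨t, ht, h2⟩⟩
          exact ⟨⟨_, ⟨s, hs, rfl⟩, by simpa using h1⟩, ⟨_, ⟨t, ht, rfl⟩, by simpa using h2⟩⟩

end
end

section
/- Let Z and X be types with a basepoint x₀ ∈ X and decidable equality on X. For a function f : Z → X with finite support (meaning f(z) = x₀ for all but finitely many z), define Λf : X × Z → ℝ by Λf(x,z) = 1/2 if f(z) = x and Λf(x,z) = 0 otherwise. Then for any two finitely supported f, g : Z → X, the function (x,z) ↦ |Λf(x,z) − Λg(x,z)| has finite support and Σ_{(x,z) ∈ X × Z} |Λf(x,z) − Λg(x,z)| equals the cardinality of {z ∈ Z : f(z) ≠ g(z)}. -/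
/-!
Statement 15: Let `Z, X` be types with a basepoint `x₀ ∈ X`.  For a finitely supported
`f : Z → X` (i.e. `f z = x₀` for all but finitely many `z`), define `Λf : X × Z → ℝ` by
`Λf(x,z) = 1/2` if `f z = x` and `0` otherwise.  Then for finitely supported `f, g`, the
function `(x,z) ↦ |Λf(x,z) − Λg(x,z)|` has finite support and its sum over `X × Z`
equals the cardinality of `{z : f z ≠ g z}`.
-/

noncomputable section

/-- The map `Λ` associated to a finitely supported function `f : Z → X`. -/
def Lam {X Z : Type} [DecidableEq X] (f : Z → X) : X × Z → ℝ :=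
  fun q => if f q.2 = q.1 then 1 / 2 else 0

theorem lam_l1_distance (X Z : Type) [DecidableEq X] (x₀ : X) (f g : Z → X)
    (hf : {z | f z ≠ x₀}.Finite) (hg : {z | g z ≠ x₀}.Finite) :
    (Function.support (fun q : X × Z => |Lam f q - Lam g q|)).Finite ∧
    ∑' q : X × Z, |Lam f q - Lam g q| = ({z | f z ≠ g z}.ncard : ℝ) := by
  classical
  have hS : {z | f z ≠ g z}.Finite := by
    apply (hf.union hg).subset
    intro z hz
    by_contra h
    simp only [Set.mem_union, Set.mem_setOf_eq] at h
    push_neg at h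
    exact hz (h.1.trans h.2.symm)
  set T : Finset (X × Z) := hS.toFinset.biUnion (fun z => {(f z, z), (g z, z)}) with hT
  -- support is contained in T
  have hsupp : ∀ q : X × Z, q ∉ T → |Lam f q - Lam g q| = 0 := by
    intro q hq
    simp only [hT, Finset.mem_biUnion, Set.Finite.mem_toFinset, Set.mem_setOf_eq,
      Finset.mem_insert, Finset.mem_singleton] at hq
    push_neg at hq
    obtain ⟨x, z⟩ := q
    simp only [Lam]
    by_cases h1 : f z = x <;> by_cases h2 : g z = x
    · simp [h1, h2]
    · exfalso
      exact (hq z (fun hfg => h2 (hfg ▸ h1))).1 (by rw [h1])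
    · exfalso
      exact (hq z (fun hfg => h1 (hfg ▸ h2))).2 (by rw [h2])
    · simp [h1, h2]
  constructor
  · apply Set.Finite.subset T.finite_toSet
    intro q hq
    by_contra h
    exact hq (hsupp q h)
  · rw [tsum_eq_sum hsupp]
    have hdisj : (hS.toFinset : Set Z).PairwiseDisjoint
        (fun z => ({(f z, z), (g z, z)} : Finset (X × Z))) := by
      intro a _ b _ hab
      simp only [Finset.disjoint_left, Finset.mem_insert, Finset.mem_singleton]
      rintro ⟨x, z⟩ h1 h2
      rcases h1 with h1 | h1 <;> rcases h2 with h2 | h2 <;>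
        exact hab ((congrArg Prod.snd h1).symm.trans (congrArg Prod.snd h2))
    rw [Finset.sum_biUnion hdisj]
    have hone : ∀ z ∈ hS.toFinset,
        ∑ q ∈ ({(f z, z), (g z, z)} : Finset (X × Z)), |Lam f q - Lam g q| = 1 := by
      intro z hz
      simp only [Set.Finite.mem_toFinset, Set.mem_setOf_eq] at hz
      have hne : ((f z, z) : X × Z) ≠ (g z, z) := fun h => hz (Prod.ext_iff.1 h).1
      rw [Finset.sum_pair hne]
      simp only [Lam]
      rw [if_neg (fun h : g z = f z => hz h.symm), if_neg hz]
      simp only [if_true, sub_zero, zero_sub, abs_neg]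
      rw [abs_of_nonneg (by norm_num : (0:ℝ) ≤ 1/2)]
      norm_num
    rw [Finset.sum_congr rfl hone, Finset.sum_const, nsmul_eq_mul, mul_one,
      Set.ncard_eq_toFinset_card _ hS]

end
end

section
/- Let (X, 𝒲) be a space with walls: 𝒲 is a collection of walls {A, Aᶜ} (A ⊆ X) such that for all x, y ∈ X the number w(x,y) of walls separating x from y is finite. Let ℋ = {A ⊆ X : {A, Aᶜ} ∈ 𝒲} be the set of half of-spaces, and let μ be the measure on 2^X given by μ(B) = (1/2)·|B ∩ ℋ| (half the counting measure of the half-spaces in B, with value ∞ when this set is infinite). Then μ is a measured walls structure on X and d_μ(x,y) = w(x,y) for all x, y ∈ X. -/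
/-!
A wall `{A, Aᶜ}` consists of two half-spaces, and distinct walls share none. So the half-spaces
cutting `{x, y}` are the disjoint union of the finitely many walls separating `x` from `y`, there
are twice as many of them as walls, and halving the counting measure gives `d_μ(x, y) = w(x, y)`.
-/

open MeasureTheory Function
open scoped ENNReal

theorem Set.encard_sUnion_of_pairwiseDisjoint {α : Type*} {S : Set (Set α)} {n : ℕ∞}
    (hS : S.Finite) (hdisj : S.PairwiseDisjoint id) (hcard : ∀ s ∈ S, s.encard = n) :
    (⋃₀ S).encard = n * S.encard := by
  induction S, hS using Set.Finite.induction_on with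
  | empty => simp
  | @insert s S hsS _ ih =>
    have hdisj' : Disjoint s (⋃₀ S) := Set.disjoint_sUnion_right.2 fun t ht =>
      hdisj (Set.mem_insert _ _) (Set.mem_insert_of_mem _ ht) (ne_of_mem_of_not_mem ht hsS).symm
    rw [Set.sUnion_insert, Set.encard_union_eq hdisj', Set.encard_insert_of_notMem hsS,
      hcard s (Set.mem_insert _ _), ih (hdisj.subset (Set.subset_insert _ _))
        fun t ht => hcard t (Set.mem_insert_of_mem _ ht), mul_add, mul_one, add_comm]

theorem MeasureTheory.Measure.count_apply_eq_encard {α : Type*} [MeasurableSpace α]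
    [MeasurableSingletonClass α] (s : Set α) : count s = s.encard := by
  rcases s.finite_or_infinite with hs | hs
  · exact count_apply hs.measurableSet
  · rw [count_apply_infinite hs, hs.encard_eq]
    rfl

theorem Function.Involutive.pair_eq_of_mem {α : Type*} {σ : α → α} (hσ : Involutive σ)
    {a b : α} (hb : b ∈ ({a, σ a} : Set α)) : ({a, σ a} : Set α) = {b, σ b} := by
  rcases hb with rfl | rfl
  · rfl
  · rw [hσ a, Set.pair_comm]

section Pairs

variable {α : Type*} {σ : α → α} {𝒲 : Set (Set α)}

theorem sUnion_eq_setOf_pair_mem (hσ : Involutive σ) (h𝒲 : ∀ W ∈ 𝒲, ∃ a, W = {a, σ a}) :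
    ⋃₀ 𝒲 = {a | {a, σ a} ∈ 𝒲} := by
  ext b
  constructor
  · rintro ⟨W, hW, hb⟩
    obtain ⟨a, rfl⟩ := h𝒲 W hW
    rwa [hσ.pair_eq_of_mem hb] at hW
  · exact fun hb => ⟨_, hb, Set.mem_insert _ _⟩

theorem pairwiseDisjoint_of_forall_eq_pair (hσ : Involutive σ)
    (h𝒲 : ∀ W ∈ 𝒲, ∃ a, W = {a, σ a}) : 𝒲.PairwiseDisjoint id := by
  intro W hW V hV hne
  obtain ⟨a, rfl⟩ := h𝒲 W hW
  obtain ⟨b, rfl⟩ := h𝒲 V hV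
  refine Set.disjoint_left.2 fun c hca hcb => hne ?_
  exact (hσ.pair_eq_of_mem hca).trans (hσ.pair_eq_of_mem hcb).symm

theorem encard_setOf_pair_mem (hσ : Involutive σ) (hfix : ∀ a, σ a ≠ a)
    (h𝒲 : ∀ W ∈ 𝒲, ∃ a, W = {a, σ a}) (hfin : 𝒲.Finite) :
    {a | {a, σ a} ∈ 𝒲}.encard = 2 * 𝒲.encard := by
  rw [← sUnion_eq_setOf_pair_mem hσ h𝒲]
  refine Set.encard_sUnion_of_pairwiseDisjoint hfin (pairwiseDisjoint_of_forall_eq_pair hσ h𝒲) ?_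
  rintro W hW
  obtain ⟨a, rfl⟩ := h𝒲 W hW
  exact Set.encard_pair (hfix a).symm

theorem setOf_pair_mem_sep_exists_mem {P : α → Prop} (hP : ∀ a, P (σ a) ↔ P a) :
    {a | {a, σ a} ∈ {W | W ∈ 𝒲 ∧ ∃ b ∈ W, P b}} = {a | P a} ∩ {a | {a, σ a} ∈ 𝒲} := by
  ext a
  refine ⟨fun ⟨ha, b, hb, hPb⟩ => ⟨?_, ha⟩, fun ⟨hPa, ha⟩ => ⟨ha, a, Set.mem_insert _ _, hPa⟩⟩
  rcases hb with rfl | rfl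
  · exact hPb
  · exact (hP a).1 hPb

end Pairs

theorem walls_counting_measure (X : Type) (𝒲 : Set (Set (X → Bool)))
    (hwall : ∀ Wl ∈ 𝒲, ∃ A : X → Bool, Wl = {A, fun x => !(A x)})
    (hfin : ∀ x y : X, {Wl | Wl ∈ 𝒲 ∧ ∃ A ∈ Wl, A x ≠ A y}.Finite) :
    ∃ μ : @Measure (X → Bool) (borel (X → Bool)),
      (∀ B : Set (X → Bool), MeasurableSet[borel (X → Bool)] B →
        μ B = (B ∩ {A : X → Bool | {A, fun x => !(A x)} ∈ 𝒲}).encard / 2) ∧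
      (∀ x y : X, μ {A | A x ≠ A y} ≠ ⊤) ∧
      (∀ x y : X, μ {A | A x ≠ A y} = {Wl | Wl ∈ 𝒲 ∧ ∃ A ∈ Wl, A x ≠ A y}.encard) := by
  let _ : MeasurableSpace (X → Bool) := borel _
  have _ : BorelSpace (X → Bool) := ⟨rfl⟩
  set ℋ := {A : X → Bool | {A, fun x => !(A x)} ∈ 𝒲}
  have hσ : Involutive fun (A : X → Bool) x => !(A x) := fun A => funext fun x => Bool.not_not _
  have hμ : ∀ B, MeasurableSet B →
      ((2⁻¹ : ℝ≥0∞) • Measure.count.restrict ℋ) B = (B ∩ ℋ).encard / 2 := fun B hB => by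
    rw [Measure.smul_apply, Measure.restrict_apply hB, Measure.count_apply_eq_encard,
      smul_eq_mul, ENNReal.div_eq_inv_mul]
  have hdist : ∀ x y : X, ((2⁻¹ : ℝ≥0∞) • Measure.count.restrict ℋ) {A | A x ≠ A y} =
      {Wl | Wl ∈ 𝒲 ∧ ∃ A ∈ Wl, A x ≠ A y}.encard := fun x y => by
    -- complementation has no fixed point only because `X` is inhabited, here by `x`
    rw [hμ _ (isOpen_ne_fun (continuous_apply x) (continuous_apply y)).measurableSet,
      ← setOf_pair_mem_sep_exists_mem (by simp),
      encard_setOf_pair_mem hσ (fun A h => by simpa using congrFun h x)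
        (fun W hW => hwall W hW.1) (hfin x y),
      ENat.toENNReal_mul, mul_comm]
    exact ENNReal.mul_div_cancel_right two_ne_zero ENNReal.ofNat_ne_top
  refine ⟨_, hμ, fun x y => ?_, hdist⟩
  rw [hdist]
  exact ENat.toENNReal_ne_top.2 (hfin x y).encard_lt_top.ne
end
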